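/- arXiv:2403.15300 — 2 statements merged into one kernel-verified Lean document; each statement's English description precedes it below -/
import Mathlib

section
/- A field k is algebraically closed if and only if every nonzero finitely generated commutative k-algebra admits a k-algebra homomorphism to k. -/
/-!
If `k` is algebraically closed, pick a maximal ideal `m` of `A`: the residue field `A ⧸ m` is
finitely generated over `k`, hence finite over `k` by Zariski's lemma, so it embeds into `k`
over `k`. Conversely, an irreducible `p` gives the nonzero finitely generated algebra
`k[X] ⧸ (p)`, and a `k`-algebra map from it to `k` sends the class of `X` to a root of `p`.
-/

open Polynomial

namespace IsAlgClosed

variable {k : Type*} [Field k]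

theorem nonempty_algHom_of_field_of_finiteType [IsAlgClosed k] (K : Type*) [Field K]
    [Algebra k K] [Algebra.FiniteType k K] : Nonempty (K →ₐ[k] k) :=
  have : Module.Finite k K := finite_of_finite_type_of_isJacobsonRing k K
  ⟨IsAlgClosed.lift⟩

theorem nonempty_algHom_of_finiteType [IsAlgClosed k] (A : Type*) [CommRing A] [Algebra k A]
    [Nontrivial A] [Algebra.FiniteType k A] : Nonempty (A →ₐ[k] k) := by
  obtain ⟨m, hm⟩ := Ideal.exists_maximal A
  let : Field (A ⧸ m) := Ideal.Quotient.field m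
  have : Algebra.FiniteType k (A ⧸ m) :=
    .of_surjective (Ideal.Quotient.mkₐ k m) (Ideal.Quotient.mkₐ_surjective k m)
  obtain ⟨φ⟩ := nonempty_algHom_of_field_of_finiteType (k := k) (A ⧸ m)
  exact ⟨φ.comp (Ideal.Quotient.mkₐ k m)⟩

theorem of_nonempty_algHom_adjoinRoot
    (H : ∀ p : k[X], Irreducible p → Nonempty (AdjoinRoot p →ₐ[k] k)) : IsAlgClosed k :=
  of_exists_root k fun p _ hp =>
    let ⟨φ⟩ := H p hp
    ⟨φ (AdjoinRoot.root p), by rw [← coe_aeval_eq_eval, AdjoinRoot.aeval_algHom_eq_zero]⟩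

end IsAlgClosed

/-- A field `k` is algebraically closed iff every nonzero finitely generated
commutative `k`-algebra admits a `k`-algebra homomorphism to `k`. -/
theorem stmt1 (k : Type) [Field k] :
    IsAlgClosed k ↔
      ∀ (A : Type) [CommRing A] [Algebra k A], Nontrivial A → Algebra.FiniteType k A →
        Nonempty (A →ₐ[k] k) := by
  refine ⟨fun _ A _ _ _ _ => IsAlgClosed.nonempty_algHom_of_finiteType A, fun H => ?_⟩
  refine IsAlgClosed.of_nonempty_algHom_adjoinRoot fun p hp => H _ ?_ inferInstance
  exact AdjoinRoot.nontrivial p (degree_pos_of_irreducible hp).ne'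
end

section
/- Let k be a field and A an integral domain that is a finitely generated k-algebra, with fraction field F = Frac(A). Then the following are equivalent: (1) for every nonzero a ∈ A there is a k-algebra homomorphism φ : A → k with φ(a) ≠ 0; (2) for every finitely generated commutative k-algebra B admitting a k-algebra homomorphism B → F, there exists a k-algebra homomorphism B → k. -/
/-- For an integral domain `A` finitely generated over `k` with fraction field `F`:
the `k`-points of `Spec A` are Zariski dense iff `k` is existentially closed in `F`. -/
theorem stmt5 (k A F : Type) [Field k] [CommRing A] [IsDomain A] [Algebra k A]
    [Field F] [Algebra A F] [IsFractionRing A F] [Algebra k F] [IsScalarTower k A F]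
    (hfg : Algebra.FiniteType k A) :
    (∀ a : A, a ≠ 0 → ∃ φ : A →ₐ[k] k, φ a ≠ 0) ↔
      (∀ (B : Type) [CommRing B] [Algebra k B], Algebra.FiniteType k B →
        Nonempty (B →ₐ[k] F) → Nonempty (B →ₐ[k] k)) := by
  have hAF : Function.Injective (algebraMap A F) := IsFractionRing.injective A F
  have hAF0 : ∀ a : A, a ≠ 0 → IsUnit (algebraMap A F a) := by
    intro a ha
    refine isUnit_iff_ne_zero.mpr fun h => ha (hAF ?_)
    simpa using h
  classical
  constructor
  · intro h1 B _ _ hB ⟨ψ⟩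
    obtain ⟨s, hs⟩ := hB
    obtain ⟨g, hg⟩ := IsLocalization.exist_integer_multiples_of_finset
      (nonZeroDivisors A) (s.image ψ)
    have hg0 : (g : A) ≠ 0 := nonZeroDivisors.coe_ne_zero g
    set L := Localization.Away (g : A) with hL
    have hgF : IsUnit (algebraMap A F (g : A)) := hAF0 _ hg0
    let ι0 : L →+* F := IsLocalization.Away.lift (g : A) hgF
    have hι0 : ∀ a : A, ι0 (algebraMap A L a) = algebraMap A F a := fun a =>
      IsLocalization.Away.lift_eq _ hgF a
    let ι : L →ₐ[k] F :=
      { ι0 with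
        commutes' := fun x => by
          show ι0 (algebraMap A L (algebraMap k A x)) = _
          rw [hι0, ← IsScalarTower.algebraMap_apply] }
    have hιa : ∀ a : A, ι (algebraMap A L a) = algebraMap A F a := hι0
    have hinj : Function.Injective ι := by
      rw [injective_iff_map_eq_zero]
      intro x hx
      obtain ⟨⟨a, m⟩, hm⟩ := IsLocalization.surj (Submonoid.powers (g : A)) x
      have h2 : ι x * ι (algebraMap A L (m : A)) = ι (algebraMap A L a) := by
        rw [← map_mul]; exact congrArg ι hm
      rw [hx, zero_mul, hιa] at h2
      have ha : a = 0 := hAF (by simpa using h2.symm)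
      subst ha
      have hu : IsUnit (algebraMap A L (m : A)) := IsLocalization.map_units L m
      exact (hu.mul_left_eq_zero).mp (by simpa using hm)
    have key : ∀ b ∈ s, ψ b ∈ ι.range := by
      intro b hb
      obtain ⟨a, ha⟩ := hg (ψ b) (Finset.mem_image_of_mem ψ hb)
      refine ⟨IsLocalization.mk' L a ⟨(g : A), Submonoid.mem_powers _⟩, ?_⟩
      have h1 : ι (IsLocalization.mk' L a ⟨(g : A), Submonoid.mem_powers _⟩) *
          algebraMap A F (g : A) = algebraMap A F a := by
        rw [← hιa (g : A), ← map_mul, IsLocalization.mk'_spec, hιa]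
      have h2 : ψ b * algebraMap A F (g : A) = algebraMap A F a := by
        rw [ha, Algebra.smul_def, mul_comm]
      exact mul_right_cancel₀ hgF.ne_zero (h1.trans h2.symm)
    have hle : ∀ b : B, ψ b ∈ ι.range := by
      intro b
      have hmem : b ∈ Algebra.adjoin k (s : Set B) := hs ▸ Algebra.mem_top
      have : Algebra.adjoin k (s : Set B) ≤ (ι.range).comap ψ :=
        Algebra.adjoin_le fun x hx => key x hx
      exact this hmem
    obtain ⟨φ, hφ⟩ := h1 (g : A) hg0
    have hφu : IsUnit (φ.toRingHom (g : A)) := isUnit_iff_ne_zero.mpr hφ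
    let χ0 : L →+* k := IsLocalization.Away.lift (g : A) hφu
    let χ : L →ₐ[k] k :=
      { χ0 with
        commutes' := fun x => by
          show χ0 (algebraMap A L (algebraMap k A x)) = _
          rw [IsLocalization.Away.lift_eq _ hφu]
          simp [φ.commutes x] }
    exact ⟨χ.comp (((AlgEquiv.ofInjective ι hinj).symm.toAlgHom).comp
      (ψ.codRestrict ι.range hle))⟩
  · intro h2 a ha
    set L := Localization.Away a with hL
    haveI hALft : Algebra.FiniteType A L :=
      IsLocalization.finiteType_of_monoid_fg (Submonoid.powers a) L
    have hft : Algebra.FiniteType k L := Algebra.FiniteType.trans hfg hALft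
    have hgF : IsUnit (algebraMap A F a) := hAF0 _ ha
    let ι0 : L →+* F := IsLocalization.Away.lift a hgF
    let ι : L →ₐ[k] F :=
      { ι0 with
        commutes' := fun x => by
          show ι0 (algebraMap A L (algebraMap k A x)) = _
          rw [IsLocalization.Away.lift_eq _ hgF, ← IsScalarTower.algebraMap_apply] }
    obtain ⟨θ⟩ := h2 L hft ⟨ι⟩
    refine ⟨θ.comp (IsScalarTower.toAlgHom k A L), ?_⟩
    have hu : IsUnit (algebraMap A L a) :=
      IsLocalization.map_units L ⟨a, Submonoid.mem_powers a⟩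
    have : IsUnit (θ (algebraMap A L a)) := hu.map θ
    simpa using this.ne_zero
end
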